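/- arXiv:2204.00440 — 4 statements merged into one kernel-verified Lean document; each statement's English description precedes it below -/
import Mathlib

section
/- Let H be a Hermitian n×n complex matrix. For every density matrix ρ one has S(ρ) − Re tr(ρH) ≤ log tr(exp(−H)), and equality holds if and only if ρ = exp(−H)/tr(exp(−H)). (Finite-volume Gibbs variational principle, equation (eq:PLambdaVariational) of the paper.) -/
open scoped Matrix ComplexOrder

/-- The von Neumann entropy of a matrix: `−Σ_i λ_i log λ_i` over the eigenvalues
(with the convention `0 log 0 = 0`), defined for Hermitian matrices. -/
noncomputable def vnEntropy {n : ℕ} (ρ : Matrix (Fin n) (Fin n) ℂ) : ℝ :=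
  if h : ρ.IsHermitian then ∑ i, Real.negMulLog (h.eigenvalues i) else 0

/-!
Diagonalise `ρ = V diag(p) V*` and `H = U diag(e) U*`. With `W = V* U`, the matrix
`c j k = |W j k|²` is doubly stochastic, and `S(ρ) = Σ -p log p`, `tr(ρH) = Σ c p e`,
`tr exp(-H) = Z = Σ exp(-e)`. Writing `s = exp(-e)/Z` for the Gibbs weights,
`S(ρ) - tr(ρH) - log Z = -Σ_{j,k} c j k · s k · klFun (p j / s k) ≤ 0` (Klein's inequality
after mixing by `c`). Equality forces `p j = s k` whenever `W j k ≠ 0`, i.e. `diag(p) W = W diag(s)`,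
which says exactly that `ρ = U diag(s) U* = exp(-H)/Z`.
-/

open Matrix Unitary Real InformationTheory Finset

section Klein

variable {p s : ℝ}

lemma mul_klFun_div (hs : 0 < s) : s * klFun (p / s) = p * log p - p * log s + s - p := by
  rcases eq_or_ne p 0 with rfl | hp
  · simp [klFun]
  · rw [klFun, log_div hp hs.ne']
    field_simp

lemma mul_klFun_div_nonneg (hp : 0 ≤ p) (hs : 0 < s) : 0 ≤ s * klFun (p / s) :=
  mul_nonneg hs.le (klFun_nonneg (div_nonneg hp hs.le))

lemma mul_klFun_div_eq_zero_iff (hp : 0 ≤ p) (hs : 0 < s) : s * klFun (p / s) = 0 ↔ p = s := by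
  rw [mul_eq_zero, klFun_eq_zero_iff (div_nonneg hp hs.le), div_eq_one_iff_eq hs.ne']
  simp [hs.ne']

end Klein

variable {ι : Type*} [Fintype ι]

section DoublyStochastic

variable [DecidableEq ι] {c : Matrix ι ι ℝ}

lemma sum_sum_mul_left_of_mem_doublyStochastic (hc : c ∈ doublyStochastic ℝ ι) (f : ι → ℝ) :
    ∑ j, ∑ k, c j k * f j = ∑ j, f j := by
  simp [← sum_mul, sum_row_of_mem_doublyStochastic hc]

lemma sum_sum_mul_right_of_mem_doublyStochastic (hc : c ∈ doublyStochastic ℝ ι) (f : ι → ℝ) :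
    ∑ j, ∑ k, c j k * f k = ∑ k, f k := by
  rw [sum_comm]
  simp [← sum_mul, sum_col_of_mem_doublyStochastic hc]

lemma sum_negMulLog_add_sum_sum_mul_log_eq (hc : c ∈ doublyStochastic ℝ ι) {p s : ι → ℝ}
    (hs : ∀ k, 0 < s k) (hps : ∑ j, p j = ∑ k, s k) :
    ∑ j, negMulLog (p j) + ∑ j, ∑ k, c j k * (p j * log (s k)) =
      -∑ j, ∑ k, c j k * (s k * klFun (p j / s k)) := by
  simp only [mul_klFun_div (hs _), mul_add, mul_sub, sum_add_distrib, sum_sub_distrib,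
    sum_sum_mul_left_of_mem_doublyStochastic hc (fun j => p j * log (p j)),
    sum_sum_mul_left_of_mem_doublyStochastic hc p,
    sum_sum_mul_right_of_mem_doublyStochastic hc s, negMulLog, neg_mul, sum_neg_distrib]
  linarith

end DoublyStochastic

noncomputable def gibbsDistribution (e : ι → ℝ) (k : ι) : ℝ :=
  exp (-e k) / ∑ l, exp (-e l)

section Gibbs

variable [Nonempty ι] (e : ι → ℝ)

lemma sum_exp_neg_pos : 0 < ∑ l, exp (-e l) :=
  sum_pos (fun _ _ => exp_pos _) univ_nonempty

lemma gibbsDistribution_pos (k : ι) : 0 < gibbsDistribution e k :=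
  div_pos (exp_pos _) (sum_exp_neg_pos e)

lemma sum_gibbsDistribution : ∑ k, gibbsDistribution e k = 1 := by
  simp only [gibbsDistribution]
  rw [← sum_div, div_self (sum_exp_neg_pos e).ne']

lemma log_gibbsDistribution (k : ι) :
    log (gibbsDistribution e k) = -e k - log (∑ l, exp (-e l)) := by
  rw [gibbsDistribution, log_div (exp_pos _).ne' (sum_exp_neg_pos e).ne', log_exp]

end Gibbs

lemma nonempty_of_sum_eq_one {p : ι → ℝ} (hp1 : ∑ j, p j = 1) : Nonempty ι :=
  univ_nonempty_iff.mp (nonempty_of_sum_ne_zero (hp1 ▸ one_ne_zero))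

section FreeEnergy

variable [DecidableEq ι] {c : Matrix ι ι ℝ} {p : ι → ℝ}

lemma free_energy_eq_neg_sum_sum_mul_klFun (hc : c ∈ doublyStochastic ℝ ι)
    (hp1 : ∑ j, p j = 1) (e : ι → ℝ) :
    ∑ j, negMulLog (p j) - ∑ j, ∑ k, c j k * (p j * e k) - log (∑ l, exp (-e l)) =
      -∑ j, ∑ k, c j k * (gibbsDistribution e k * klFun (p j / gibbsDistribution e k)) := by
  have := nonempty_of_sum_eq_one hp1
  have hlog : ∑ j, ∑ k, c j k * (p j * log (gibbsDistribution e k)) =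
      -∑ j, ∑ k, c j k * (p j * e k) - log (∑ l, exp (-e l)) := by
    simp only [log_gibbsDistribution, mul_sub, mul_neg, sum_sub_distrib, sum_neg_distrib]
    rw [sum_sum_mul_left_of_mem_doublyStochastic hc (fun j => p j * log (∑ l, exp (-e l))),
      ← sum_mul, hp1, one_mul]
  rw [← sum_negMulLog_add_sum_sum_mul_log_eq hc (gibbsDistribution_pos e)
    (by rw [hp1, sum_gibbsDistribution]), hlog]
  ring

theorem gibbs_variational_principle_of_mem_doublyStochastic (hc : c ∈ doublyStochastic ℝ ι)
    (hp : ∀ j, 0 ≤ p j) (hp1 : ∑ j, p j = 1) (e : ι → ℝ) :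
    ∑ j, negMulLog (p j) - ∑ j, ∑ k, c j k * (p j * e k) ≤ log (∑ l, exp (-e l)) ∧
      (∑ j, negMulLog (p j) - ∑ j, ∑ k, c j k * (p j * e k) = log (∑ l, exp (-e l)) ↔
        ∀ j k, c j k = 0 ∨ p j = gibbsDistribution e k) := by
  have := nonempty_of_sum_eq_one hp1
  have hterm (j k : ι) :
      0 ≤ c j k * (gibbsDistribution e k * klFun (p j / gibbsDistribution e k)) :=
    mul_nonneg (nonneg_of_mem_doublyStochastic hc) <|
      mul_klFun_div_nonneg (hp j) (gibbsDistribution_pos e k)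
  have hsum := sum_nonneg fun j (_ : j ∈ univ) => sum_nonneg fun k (_ : k ∈ univ) => hterm j k
  have hid := free_energy_eq_neg_sum_sum_mul_klFun hc hp1 e
  refine ⟨by linarith, ?_⟩
  rw [← sub_eq_zero, hid, neg_eq_zero,
    sum_eq_zero_iff_of_nonneg fun j _ => sum_nonneg fun k _ => hterm j k]
  simp only [mem_univ, true_implies, sum_eq_zero_iff_of_nonneg fun k _ => hterm _ k, mul_eq_zero,
    mul_klFun_div_eq_zero_iff (hp _) (gibbsDistribution_pos e _)]

end FreeEnergy

section Unitary

variable {𝕜 : Type*} [RCLike 𝕜] [DecidableEq ι]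

lemma Matrix.trace_conjStarAlgAut (u : unitary (Matrix ι ι 𝕜)) (A : Matrix ι ι 𝕜) :
    (conjStarAlgAut 𝕜 _ u A).trace = A.trace := by
  rw [conjStarAlgAut_apply, trace_mul_cycle, coe_star_mul_self, one_mul]

lemma Matrix.norm_sq_entries_mem_doublyStochastic {W : Matrix ι ι 𝕜}
    (hW : W ∈ unitaryGroup ι 𝕜) : of (fun j k => ‖W j k‖ ^ 2) ∈ doublyStochastic ℝ ι := by
  have hrow (j : ι) : ((∑ k, ‖W j k‖ ^ 2 : ℝ) : 𝕜) = 1 := by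
    rw [← one_apply_eq (α := 𝕜) j, ← mul_star_self_of_mem hW]
    simp [mul_apply, ← starRingEnd_apply, RCLike.mul_conj]
  have hcol (k : ι) : ((∑ j, ‖W j k‖ ^ 2 : ℝ) : 𝕜) = 1 := by
    rw [← one_apply_eq (α := 𝕜) k, ← star_mul_self_of_mem hW]
    simp [mul_apply, ← starRingEnd_apply, RCLike.conj_mul]
  refine mem_doublyStochastic_iff_sum.mpr ⟨fun _ _ => sq_nonneg _, fun j => ?_, fun k => ?_⟩
  · exact_mod_cast hrow j
  · exact_mod_cast hcol k

lemma Matrix.trace_conj_diagonal_mul_conj_diagonal (u v : unitary (Matrix ι ι 𝕜))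
    (a b : ι → ℝ) :
    (conjStarAlgAut 𝕜 _ u (diagonal (RCLike.ofReal ∘ a)) *
        conjStarAlgAut 𝕜 _ v (diagonal (RCLike.ofReal ∘ b))).trace =
      ((∑ j, ∑ k, ‖(↑(star u * v) : Matrix ι ι 𝕜) j k‖ ^ 2 * (a j * b k) : ℝ) : 𝕜) := by
  set W : Matrix ι ι 𝕜 := ↑(star u * v)
  have hconj : conjStarAlgAut 𝕜 _ u (diagonal (RCLike.ofReal ∘ a)) *
        conjStarAlgAut 𝕜 _ v (diagonal (RCLike.ofReal ∘ b)) =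
      conjStarAlgAut 𝕜 _ u
        (diagonal (RCLike.ofReal ∘ a) * W * diagonal (RCLike.ofReal ∘ b) * star W) := by
    simp only [conjStarAlgAut_apply, W, Submonoid.coe_mul, coe_star, star_mul, star_star,
      Matrix.mul_assoc, mul_star_self_of_mem u.prop, Matrix.mul_one]
  rw [hconj, trace_conjStarAlgAut]
  simp only [trace, diag_apply]
  push_cast
  refine sum_congr rfl fun j _ => ?_
  rw [mul_apply]
  refine sum_congr rfl fun k _ => ?_
  rw [mul_diagonal, diagonal_mul, star_apply, RCLike.star_def, ← RCLike.mul_conj]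
  simp only [Function.comp_apply]
  ring

lemma Matrix.diagonal_eq_conj_diagonal_iff (w : unitary (Matrix ι ι 𝕜)) (a b : ι → 𝕜) :
    diagonal a = conjStarAlgAut 𝕜 _ w (diagonal b) ↔
      ∀ j k, (w : Matrix ι ι 𝕜) j k = 0 ∨ a j = b k := by
  have hcomm : diagonal a = conjStarAlgAut 𝕜 _ w (diagonal b) ↔
      diagonal a * w = w * diagonal b := by
    rw [conjStarAlgAut_apply]
    constructor
    · intro h
      rw [h, Matrix.mul_assoc, coe_star_mul_self, Matrix.mul_one]
    · intro h
      rw [← h, Matrix.mul_assoc, mul_star_self_of_mem w.prop, Matrix.mul_one]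
  rw [hcomm, ← Matrix.ext_iff]
  refine forall_congr' fun j => forall_congr' fun k => ?_
  rw [diagonal_mul, mul_diagonal, mul_comm, mul_eq_mul_left_iff, or_comm]

lemma Matrix.conj_diagonal_eq_conj_diagonal_iff (u v : unitary (Matrix ι ι 𝕜)) (a b : ι → 𝕜) :
    conjStarAlgAut 𝕜 _ u (diagonal a) = conjStarAlgAut 𝕜 _ v (diagonal b) ↔
      ∀ j k, (↑(star u * v) : Matrix ι ι 𝕜) j k = 0 ∨ a j = b k := by
  rw [← diagonal_eq_conj_diagonal_iff, conjStarAlgAut_mul_apply, ← conjStarAlgAut_symm,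
    StarAlgEquiv.eq_symm_apply]

end Unitary

namespace Matrix.IsHermitian

variable [DecidableEq ι]

lemma trace_cfc {𝕜 : Type*} [RCLike 𝕜] {A : Matrix ι ι 𝕜} (hA : A.IsHermitian) (f : ℝ → ℝ) :
    (hA.cfc f).trace = ∑ i, (f (hA.eigenvalues i) : 𝕜) := by
  rw [IsHermitian.cfc, trace_conjStarAlgAut, trace_diagonal]
  rfl

variable {A : Matrix ι ι ℂ}

lemma exp_neg_eq_cfc (hA : A.IsHermitian) :
    NormedSpace.exp (-A) = hA.cfc (fun x => Real.exp (-x)) := by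
  -- `NormedSpace.exp` only sees the topology, so we may borrow the C⋆-norm that the CFC needs.
  open scoped Matrix.Norms.L2Operator in
  rw [← CFC.real_exp_eq_normedSpace_exp hA.isSelfAdjoint.neg, ← cfc_comp_neg .., hA.cfc_eq]

lemma trace_exp_neg (hA : A.IsHermitian) :
    (NormedSpace.exp (-A)).trace = ((∑ i, Real.exp (-hA.eigenvalues i) : ℝ) : ℂ) := by
  rw [hA.exp_neg_eq_cfc, trace_cfc]
  norm_cast

lemma inv_trace_exp_neg_smul_exp_neg (hA : A.IsHermitian) :
    (NormedSpace.exp (-A)).trace⁻¹ • NormedSpace.exp (-A) =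
      conjStarAlgAut ℂ _ hA.eigenvectorUnitary
        (diagonal (RCLike.ofReal ∘ gibbsDistribution hA.eigenvalues)) := by
  rw [hA.trace_exp_neg, hA.exp_neg_eq_cfc, IsHermitian.cfc, ← map_smul, ← diagonal_smul]
  congr 2
  ext i
  simp [gibbsDistribution, div_eq_inv_mul]

end Matrix.IsHermitian

theorem finite_volume_gibbs_variational_principle_general {n : ℕ}
    (H ρ : Matrix (Fin n) (Fin n) ℂ) (hH : H.IsHermitian)
    (hρ : ρ.PosSemidef) (hρ1 : ρ.trace = 1) :
    vnEntropy ρ - ((ρ * H).trace).re ≤ Real.log ((NormedSpace.exp (-H)).trace).re ∧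
      (vnEntropy ρ - ((ρ * H).trace).re = Real.log ((NormedSpace.exp (-H)).trace).re ↔
        ρ = ((NormedSpace.exp (-H)).trace)⁻¹ • NormedSpace.exp (-H)) := by
  set p := hρ.isHermitian.eigenvalues
  set W : unitary (Matrix (Fin n) (Fin n) ℂ) :=
    star hρ.isHermitian.eigenvectorUnitary * hH.eigenvectorUnitary with hW
  have hS : vnEntropy ρ = ∑ j, negMulLog (p j) := dif_pos hρ.isHermitian
  have hp1 : ∑ j, p j = 1 := by
    simpa using congrArg Complex.re (hρ.isHermitian.trace_eq_sum_eigenvalues.symm.trans hρ1)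
  have hρH : ((ρ * H).trace).re =
      ∑ j, ∑ k, ‖(W : Matrix (Fin n) (Fin n) ℂ) j k‖ ^ 2 * (p j * hH.eigenvalues k) := by
    have := trace_conj_diagonal_mul_conj_diagonal hρ.isHermitian.eigenvectorUnitary
      hH.eigenvectorUnitary p hH.eigenvalues
    rw [← hρ.isHermitian.spectral_theorem, ← hH.spectral_theorem] at this
    rw [this]
    exact RCLike.ofReal_re (K := ℂ) _
  obtain ⟨hle, heq⟩ := gibbs_variational_principle_of_mem_doublyStochastic
    (norm_sq_entries_mem_doublyStochastic W.prop) hρ.eigenvalues_nonneg hp1 hH.eigenvalues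
  rw [hS, hρH, hH.inv_trace_exp_neg_smul_exp_neg, hH.trace_exp_neg, Complex.ofReal_re]
  refine ⟨hle, heq.trans ?_⟩
  conv_rhs => rw [hρ.isHermitian.spectral_theorem, conj_diagonal_eq_conj_diagonal_iff, ← hW]
  simp only [of_apply, sq_eq_zero_iff, norm_eq_zero, Function.comp_apply, RCLike.ofReal_inj]

/-- Finite-volume Gibbs variational principle: for Hermitian `H` and any density matrix `ρ`,
`S(ρ) − Re tr(ρH) ≤ log tr(exp(−H))`, with equality iff `ρ = exp(−H)/tr(exp(−H))`. -/
theorem finite_volume_gibbs_variational_principle {n : ℕ} (hn : 0 < n)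
    (H ρ : Matrix (Fin n) (Fin n) ℂ) (hH : H.IsHermitian)
    (hρ : ρ.PosSemidef) (hρ1 : ρ.trace = 1) :
    vnEntropy ρ - ((ρ * H).trace).re ≤ Real.log ((NormedSpace.exp (-H)).trace).re ∧
      (vnEntropy ρ - ((ρ * H).trace).re = Real.log ((NormedSpace.exp (-H)).trace).re ↔
        ρ = ((NormedSpace.exp (-H)).trace)⁻¹ • NormedSpace.exp (-H)) :=
  finite_volume_gibbs_variational_principle_general H ρ hH hρ hρ1
end

section
/- Let K be a Hermitian n×n complex matrix and let σ = exp(−K)/tr(exp(−K)) be the associated Gibbs density matrix. If ρ is any density matrix with S(ρ) ≥ S(σ), then Re tr(ρK) ≥ Re tr(σK). (Finite-dimensional form of the mechanism behind Theorem thm-mil: a state whose entropy is at least that of the Gibbs state has at least the Gibbs mean energy.) -/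
/-!
Diagonalise `K = W diag(k) W⋆`. The Gibbs state is then `σ = W diag(q) W⋆` with
`q_j = e^{-k_j}/Z`, `Z = Σ_j e^{-k_j}`, and a direct computation gives `S(σ) - tr(σK) = log Z`.
For a density matrix `ρ`, let `r` be the diagonal of `W⋆ρW`, so that `tr(ρK) = Σ_j r_j k_j`.
Since `r` is the spectrum of `ρ` mixed by the doubly stochastic matrix `|W⋆U|²` (`U` the
eigenvector unitary of `ρ`), concavity of `-x log x` gives `S(ρ) ≤ H(r)`, and the classical Gibbs
inequality `H(r) - Σ_j r_j k_j ≤ log Z` yields `S(ρ) - tr(ρK) ≤ S(σ) - tr(σK)`.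
-/

open scoped Matrix ComplexOrder

open Matrix Unitary Real

noncomputable def gibbsWeights {ι : Type*} [Fintype ι] (k : ι → ℝ) (j : ι) : ℝ :=
  exp (-k j) / ∑ i, exp (-k i)

theorem ConcaveOn.sum_le_sum_mulVec_of_mem_doublyStochastic {ι 𝕜 β : Type*} [Fintype ι]
    [DecidableEq ι] [Field 𝕜] [LinearOrder 𝕜] [IsStrictOrderedRing 𝕜] [AddCommGroup β]
    [PartialOrder β] [IsOrderedAddMonoid β] [Module 𝕜 β] [IsStrictOrderedModule 𝕜 β]
    {s : Set 𝕜} {φ : 𝕜 → β} (hφ : ConcaveOn 𝕜 s φ) {M : Matrix ι ι 𝕜}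
    (hM : M ∈ doublyStochastic 𝕜 ι) {x : ι → 𝕜} (hx : ∀ i, x i ∈ s) :
    ∑ i, φ (x i) ≤ ∑ j, φ ((M *ᵥ x) j) :=
  calc ∑ i, φ (x i) = ∑ j, ∑ i, M j i • φ (x i) := by
        rw [Finset.sum_comm]
        simp only [← Finset.sum_smul, sum_col_of_mem_doublyStochastic hM, one_smul]
    _ ≤ ∑ j, φ (∑ i, M j i • x i) := Finset.sum_le_sum fun j _ =>
        hφ.le_map_sum (fun i _ => nonneg_of_mem_doublyStochastic hM)
          (sum_row_of_mem_doublyStochastic hM j) fun i _ => hx i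
    _ = ∑ j, φ ((M *ᵥ x) j) := by simp only [mulVec, dotProduct, smul_eq_mul]

namespace Real

theorem negMulLog_add_mul_log_le {r q : ℝ} (hr : 0 ≤ r) (hq : 0 < q) :
    negMulLog r + r * log q ≤ q - r := by
  rcases hr.eq_or_lt with rfl | hr
  · simp [hq.le]
  · have hlog := log_le_sub_one_of_pos (div_pos hq hr)
    rw [log_div hq.ne' hr.ne'] at hlog
    calc negMulLog r + r * log q = r * (log q - log r) := by rw [negMulLog]; ring
      _ ≤ r * (q / r - 1) := mul_le_mul_of_nonneg_left hlog hr.le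
      _ = q - r := by field_simp

variable {ι : Type*} [Fintype ι]

theorem sum_exp_neg_pos [Nonempty ι] (k : ι → ℝ) : 0 < ∑ i, exp (-k i) :=
  Finset.sum_pos (fun _ _ => exp_pos _) Finset.univ_nonempty

theorem sum_negMulLog_sub_sum_mul_le_log_sum_exp {r : ι → ℝ} (hr : ∀ i, 0 ≤ r i)
    (hr1 : ∑ i, r i = 1) (k : ι → ℝ) :
    ∑ i, negMulLog (r i) - ∑ i, r i * k i ≤ log (∑ i, exp (-k i)) := by
  obtain ⟨i, -⟩ := Finset.exists_ne_zero_of_sum_ne_zero (hr1.trans_ne one_ne_zero)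
  have : Nonempty ι := ⟨i⟩
  have hZ := sum_exp_neg_pos k
  have hterms := Finset.sum_le_sum fun i (_ : i ∈ Finset.univ) =>
    negMulLog_add_mul_log_le (hr i) (div_pos (exp_pos (-k i)) hZ)
  simp only [log_div (exp_pos _).ne' hZ.ne', log_exp, Finset.sum_add_distrib,
    Finset.sum_sub_distrib, ← Finset.sum_div, div_self hZ.ne', hr1, mul_sub, ← Finset.sum_mul,
    one_mul, mul_neg, Finset.sum_neg_distrib] at hterms
  linarith

theorem sum_gibbsWeights [Nonempty ι] (k : ι → ℝ) : ∑ i, gibbsWeights k i = 1 := by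
  simp only [gibbsWeights, ← Finset.sum_div, div_self (sum_exp_neg_pos k).ne']

theorem sum_negMulLog_gibbsWeights_sub_sum_mul (k : ι → ℝ) :
    ∑ i, negMulLog (gibbsWeights k i) - ∑ i, gibbsWeights k i * k i =
      log (∑ i, exp (-k i)) := by
  cases isEmpty_or_nonempty ι
  · simp
  have hZ := sum_exp_neg_pos k
  have h : ∀ i, negMulLog (gibbsWeights k i) =
      gibbsWeights k i * k i + gibbsWeights k i * log (∑ i, exp (-k i)) := fun i => by
    rw [negMulLog, gibbsWeights, log_div (exp_pos _).ne' hZ.ne', log_exp]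
    ring
  simp only [h, Finset.sum_add_distrib, ← Finset.sum_mul, sum_gibbsWeights, one_mul,
    add_sub_cancel_left]

end Real

namespace Matrix

variable {n 𝕜 : Type*} [Fintype n] [DecidableEq n] [RCLike 𝕜]

theorem map_norm_sq_mem_doublyStochastic (U : unitary (Matrix n n 𝕜)) :
    (U : Matrix n n 𝕜).map (‖·‖ ^ 2) ∈ doublyStochastic ℝ n := by
  refine mem_doublyStochastic_iff_sum.2 ⟨fun _ _ => sq_nonneg _, fun i => ?_, fun j => ?_⟩
  · have h := congr_fun₂ (Unitary.coe_mul_star_self U) i i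
    simp only [Unitary.coe_star, mul_apply, star_apply, RCLike.star_def, RCLike.mul_conj,
      one_apply_eq] at h
    simpa only [map_apply] using (by exact_mod_cast h : ∑ j, ‖(U : Matrix n n 𝕜) i j‖ ^ 2 = 1)
  · have h := congr_fun₂ (Unitary.coe_star_mul_self U) j j
    simp only [mul_apply, star_apply, RCLike.star_def, RCLike.conj_mul, one_apply_eq] at h
    simpa only [map_apply] using (by exact_mod_cast h : ∑ i, ‖(U : Matrix n n 𝕜) i j‖ ^ 2 = 1)

theorem conjStarAlgAut_diagonal_apply_self (U : unitary (Matrix n n 𝕜)) (d : n → ℝ) (j : n) :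
    conjStarAlgAut 𝕜 _ U (diagonal (RCLike.ofReal ∘ d)) j j =
      (((U : Matrix n n 𝕜).map (‖·‖ ^ 2) *ᵥ d) j : 𝕜) := by
  rw [conjStarAlgAut_apply, mul_apply]
  simp only [mul_diagonal, star_apply, RCLike.star_def, mulVec, dotProduct, map_apply,
    Function.comp_apply, RCLike.ofReal_sum, RCLike.ofReal_mul, RCLike.ofReal_pow]
  refine Finset.sum_congr rfl fun i _ => ?_
  rw [mul_right_comm, RCLike.mul_conj]

theorem continuous_conjStarAlgAut (U : unitary (Matrix n n 𝕜)) :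
    Continuous (conjStarAlgAut 𝕜 _ U) := by
  rw [show ⇑(conjStarAlgAut 𝕜 _ U) = fun A => (U : Matrix n n 𝕜) * A * star (U : Matrix n n 𝕜)
    from funext (conjStarAlgAut_apply U)]
  fun_prop

-- `map_exp` needs a normed algebra; `NormedSpace.exp` itself does not depend on the norm.
theorem exp_conjStarAlgAut (U : unitary (Matrix n n 𝕜)) (A : Matrix n n 𝕜) :
    NormedSpace.exp (conjStarAlgAut 𝕜 _ U A) = conjStarAlgAut 𝕜 _ U (NormedSpace.exp A) :=
  open scoped Matrix.Norms.Operator in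
  (NormedSpace.map_exp _ (continuous_conjStarAlgAut U) A).symm

theorem trace_conjStarAlgAut_s1 (U : unitary (Matrix n n 𝕜)) (A : Matrix n n 𝕜) :
    (conjStarAlgAut 𝕜 _ U A).trace = A.trace := by
  rw [conjStarAlgAut_apply, trace_mul_cycle, Unitary.coe_star_mul_self, one_mul]

theorem re_trace_mul_conjStarAlgAut_diagonal (A : Matrix n n 𝕜) (U : unitary (Matrix n n 𝕜))
    (k : n → ℝ) :
    RCLike.re (A * conjStarAlgAut 𝕜 _ U (diagonal (RCLike.ofReal ∘ k))).trace =
      ∑ j, RCLike.re (conjStarAlgAut 𝕜 _ (star U) A j j) * k j := by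
  rw [← trace_conjStarAlgAut_s1 (star U), map_mul, ← conjStarAlgAut_symm,
    StarAlgEquiv.symm_apply_apply, conjStarAlgAut_symm, trace, map_sum]
  simp [mul_diagonal]

namespace IsHermitian
variable {A : Matrix n n 𝕜}

theorem sum_comp_eigenvalues_eq_of_eq_conjStarAlgAut (hA : A.IsHermitian)
    {U : unitary (Matrix n n 𝕜)} {d : n → ℝ}
    (hAd : A = conjStarAlgAut 𝕜 _ U (diagonal (RCLike.ofReal ∘ d))) (f : ℝ → ℝ) :
    ∑ i, f (hA.eigenvalues i) = ∑ i, f (d i) := by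
  have hroots := hA.roots_charpoly_eq_eigenvalues
  have hchar : A.charpoly = ∏ i, (Polynomial.X - Polynomial.C (d i : 𝕜)) := by
    rw [hAd, conjStarAlgAut_apply, charpoly_mul_comm, ← mul_assoc, Unitary.coe_star_mul_self,
      one_mul, charpoly_diagonal]
    rfl
  rw [hchar, Polynomial.roots_prod _ _ (by simp [Finset.prod_ne_zero_iff,
      Polynomial.X_sub_C_ne_zero])] at hroots
  have := congr_arg (fun s => (s.map (fun z => f (RCLike.re z))).sum) hroots
  simpa [Multiset.map_map] using this.symm

theorem re_diag_conjStarAlgAut (hA : A.IsHermitian) (V : unitary (Matrix n n 𝕜)) (j : n) :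
    RCLike.re (conjStarAlgAut 𝕜 _ V A j j) =
      (((V * hA.eigenvectorUnitary : unitary (Matrix n n 𝕜)) : Matrix n n 𝕜).map (‖·‖ ^ 2)
        *ᵥ hA.eigenvalues) j := by
  conv_lhs => rw [hA.spectral_theorem, ← StarAlgEquiv.trans_apply,
    conjStarAlgAut_trans_conjStarAlgAut, conjStarAlgAut_diagonal_apply_self, RCLike.ofReal_re]

-- Schur's majorization of the diagonal by the spectrum, in the form of concave sums.
theorem sum_le_sum_re_diag_conjStarAlgAut {s : Set ℝ} {φ : ℝ → ℝ} (hφ : ConcaveOn ℝ s φ)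
    (hA : A.IsHermitian) (hs : ∀ i, hA.eigenvalues i ∈ s) (V : unitary (Matrix n n 𝕜)) :
    ∑ i, φ (hA.eigenvalues i) ≤ ∑ j, φ (RCLike.re (conjStarAlgAut 𝕜 _ V A j j)) := by
  simp only [hA.re_diag_conjStarAlgAut V]
  exact hφ.sum_le_sum_mulVec_of_mem_doublyStochastic (map_norm_sq_mem_doublyStochastic _) hs

theorem exp_neg_eq_conjStarAlgAut (hA : A.IsHermitian) :
    NormedSpace.exp (-A) = conjStarAlgAut 𝕜 _ hA.eigenvectorUnitary
      (diagonal (RCLike.ofReal ∘ fun i => Real.exp (-hA.eigenvalues i))) := by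
  conv_lhs => rw [hA.spectral_theorem]
  rw [← map_neg, exp_conjStarAlgAut, diagonal_neg, exp_diagonal]
  congr 2
  ext i
  simp only [Pi.exp_def, Function.comp_apply, Real.exp_eq_exp_ℝ, ← RCLike.algebraMap_eq_ofReal,
    NormedSpace.algebraMap_exp_comm, map_neg]

theorem gibbs_eq_conjStarAlgAut (hA : A.IsHermitian) :
    (NormedSpace.exp (-A)).trace⁻¹ • NormedSpace.exp (-A) = conjStarAlgAut 𝕜 _
      hA.eigenvectorUnitary (diagonal (RCLike.ofReal ∘ gibbsWeights hA.eigenvalues)) := by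
  rw [hA.exp_neg_eq_conjStarAlgAut, trace_conjStarAlgAut_s1, ← map_smul, trace_diagonal,
    ← diagonal_smul]
  congr 2
  ext i
  simp [gibbsWeights, div_eq_inv_mul]

end IsHermitian
end Matrix

theorem vnEntropy_conjStarAlgAut_diagonal {n : ℕ} (U : unitary (Matrix (Fin n) (Fin n) ℂ))
    (d : Fin n → ℝ) :
    vnEntropy (conjStarAlgAut ℂ _ U (diagonal (RCLike.ofReal ∘ d))) = ∑ i, negMulLog (d i) := by
  have hH : (conjStarAlgAut ℂ _ U (diagonal (RCLike.ofReal ∘ d))).IsHermitian :=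
    IsSelfAdjoint.map (isHermitian_diagonal_of_self_adjoint _
      (funext fun _ => RCLike.conj_ofReal _)).isSelfAdjoint _
  rw [vnEntropy, dif_pos hH]
  exact hH.sum_comp_eigenvalues_eq_of_eq_conjStarAlgAut rfl _

theorem Matrix.PosSemidef.vnEntropy_le_sum_negMulLog_re_diag {n : ℕ}
    {ρ : Matrix (Fin n) (Fin n) ℂ} (hρ : ρ.PosSemidef) (V : unitary (Matrix (Fin n) (Fin n) ℂ)) :
    vnEntropy ρ ≤ ∑ j, negMulLog (conjStarAlgAut ℂ _ V ρ j j).re := by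
  rw [vnEntropy, dif_pos hρ.1]
  exact hρ.1.sum_le_sum_re_diag_conjStarAlgAut concaveOn_negMulLog hρ.eigenvalues_nonneg V

theorem energy_ge_of_entropy_ge_gibbs_general {n : ℕ}
    (K ρ σ : Matrix (Fin n) (Fin n) ℂ) (hK : K.IsHermitian)
    (hσ : σ = ((NormedSpace.exp (-K)).trace)⁻¹ • NormedSpace.exp (-K))
    (hρ : ρ.PosSemidef) (hρ1 : ρ.trace = 1)
    (hS : vnEntropy σ ≤ vnEntropy ρ) :
    ((σ * K).trace).re ≤ ((ρ * K).trace).re := by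
  set W := hK.eigenvectorUnitary
  set k := hK.eigenvalues
  have hEnergy (A : Matrix (Fin n) (Fin n) ℂ) :
      ((A * K).trace).re = ∑ j, (conjStarAlgAut ℂ _ (star W) A j j).re * k j := by
    conv_lhs => rw [hK.spectral_theorem]
    exact re_trace_mul_conjStarAlgAut_diagonal A W k
  have hσW : σ = conjStarAlgAut ℂ _ W (diagonal (RCLike.ofReal ∘ gibbsWeights k)) :=
    hσ.trans hK.gibbs_eq_conjStarAlgAut
  have hEσ : ((σ * K).trace).re = ∑ j, gibbsWeights k j * k j := by
    rw [hEnergy, hσW, ← conjStarAlgAut_symm, StarAlgEquiv.symm_apply_apply]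
    simp
  set r := fun j => (conjStarAlgAut ℂ _ (star W) ρ j j).re
  have hr0 (j : Fin n) : 0 ≤ r j :=
    (Complex.nonneg_iff.1 (hρ.mul_mul_conjTranspose_same _).diag_nonneg).1
  have hr1 : ∑ j, r j = 1 := by
    rw [← Complex.re_sum]
    change ((conjStarAlgAut ℂ _ (star W) ρ).trace).re = 1
    rw [trace_conjStarAlgAut_s1, hρ1, Complex.one_re]
  have hSρ := hρ.vnEntropy_le_sum_negMulLog_re_diag (star W)
  have hρ_free := sum_negMulLog_sub_sum_mul_le_log_sum_exp hr0 hr1 k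
  have hσ_free := sum_negMulLog_gibbsWeights_sub_sum_mul k
  rw [hσW, vnEntropy_conjStarAlgAut_diagonal] at hS
  rw [hEσ, hEnergy]
  linarith

/-- If a density matrix `ρ` has entropy at least that of the Gibbs state
`σ = exp(−K)/tr(exp(−K))`, then its mean energy `Re tr(ρK)` is at least the Gibbs mean
energy `Re tr(σK)`. -/
theorem energy_ge_of_entropy_ge_gibbs {n : ℕ} (hn : 0 < n)
    (K ρ σ : Matrix (Fin n) (Fin n) ℂ) (hK : K.IsHermitian)
    (hσ : σ = ((NormedSpace.exp (-K)).trace)⁻¹ • NormedSpace.exp (-K))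
    (hρ : ρ.PosSemidef) (hρ1 : ρ.trace = 1)
    (hS : vnEntropy σ ≤ vnEntropy ρ) :
    ((σ * K).trace).re ≤ ((ρ * K).trace).re :=
  energy_ge_of_entropy_ge_gibbs_general K ρ σ hK hσ hρ hρ1 hS
end

section
/- (Peierls–Bogoliubov inequality.) Let H and V be Hermitian n×n complex matrices. Then log tr(exp(−(H+V))) ≥ log tr(exp(−H)) − Re tr(exp(−H)·V)/tr(exp(−H)). In particular, tr(exp(−(H+V))) ≥ e^{−‖V‖} tr(exp(−H)). -/
/-!
Let `(bᵢ)` be an orthonormal eigenbasis of `H` with eigenvalues `λᵢ`, and `vᵢ = ⟪bᵢ, V bᵢ⟫`.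
Peierls' inequality: for a convex `f` and any orthonormal basis `(bᵢ)`,
`∑ᵢ f ⟪bᵢ, A bᵢ⟫ ≤ tr f(A)`, because for an eigenbasis `(ψⱼ)` of `A` with eigenvalues `μⱼ`,
each `⟪bᵢ, A bᵢ⟫` is the average of the `μⱼ` with weights `|⟪ψⱼ, bᵢ⟫|²`, and these weights form
a doubly stochastic matrix. With `A = H + V` and `f = exp (-·)` this gives
`∑ᵢ exp (-(λᵢ + vᵢ)) ≤ tr exp (-(H + V))`. Jensen's inequality for the Gibbs weights
`exp (-λᵢ) / Z`, with `Z = tr exp (-H)`, bounds the left side below by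
`Z exp (-tr (exp (-H) V) / Z)`; taking logarithms gives the first claim, and `|vᵢ| ≤ ‖V‖` the
second.
-/

open scoped Matrix ComplexOrder

/-- The ℓ²→ℓ² operator norm of a complex matrix. -/
noncomputable def opNorm {n : ℕ} (A : Matrix (Fin n) (Fin n) ℂ) : ℝ :=
  ‖Matrix.toEuclideanCLM (𝕜 := ℂ) A‖

open scoped InnerProductSpace

section Peierls

variable {𝕜 E ι κ : Type*} [RCLike 𝕜] [NormedAddCommGroup E] [InnerProductSpace 𝕜 E]
  [Fintype ι] [Fintype κ] (T : E →L[𝕜] E) (ψ : OrthonormalBasis κ 𝕜 E) (μ : κ → ℝ)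

lemma ContinuousLinearMap.reApplyInnerSelf_eq_sum_of_eigenbasis
    (hψ : ∀ j, T (ψ j) = (μ j : 𝕜) • ψ j) (x : E) :
    T.reApplyInnerSelf x = ∑ j, ‖⟪ψ j, x⟫_𝕜‖ ^ 2 * μ j := by
  have expand : T x = ∑ j, (μ j : 𝕜) • ⟪ψ j, x⟫_𝕜 • ψ j := by
    conv_lhs => rw [← ψ.sum_repr' x]
    simp only [map_sum, map_smul, hψ, smul_smul, mul_comm]
  rw [T.reApplyInnerSelf_apply, expand, sum_inner, map_sum]
  refine Finset.sum_congr rfl fun j _ => ?_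
  rw [inner_smul_left, inner_smul_left, RCLike.conj_ofReal, mul_comm,
    RCLike.conj_mul, ← RCLike.ofReal_pow, ← RCLike.ofReal_mul, RCLike.ofReal_re]

theorem ConvexOn.sum_comp_reApplyInnerSelf_le {s : Set ℝ} {f : ℝ → ℝ} (hf : ConvexOn ℝ s f)
    (b : OrthonormalBasis ι 𝕜 E) (hμ : ∀ j, μ j ∈ s) (hψ : ∀ j, T (ψ j) = (μ j : 𝕜) • ψ j) :
    ∑ i, f (T.reApplyInnerSelf (b i)) ≤ ∑ j, f (μ j) := by
  have jensen (i : ι) :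
      f (T.reApplyInnerSelf (b i)) ≤ ∑ j, ‖⟪ψ j, b i⟫_𝕜‖ ^ 2 * f (μ j) := by
    rw [T.reApplyInnerSelf_eq_sum_of_eigenbasis ψ μ hψ]
    exact hf.map_sum_le (fun j _ => by positivity) (by simp [ψ.sum_sq_norm_inner_right])
      (fun j _ => hμ j)
  calc ∑ i, f (T.reApplyInnerSelf (b i))
      ≤ ∑ i, ∑ j, ‖⟪ψ j, b i⟫_𝕜‖ ^ 2 * f (μ j) := Finset.sum_le_sum fun i _ => jensen i
    _ = ∑ j, f (μ j) := by
      rw [Finset.sum_comm]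
      simp [← Finset.sum_mul, b.sum_sq_norm_inner_left]

end Peierls

lemma ContinuousLinearMap.reApplyInnerSelf_add {𝕜 E : Type*} [RCLike 𝕜] [NormedAddCommGroup E]
    [InnerProductSpace 𝕜 E] (S T : E →L[𝕜] E) (x : E) :
    (S + T).reApplyInnerSelf x = S.reApplyInnerSelf x + T.reApplyInnerSelf x := by
  simp [reApplyInnerSelf_apply, inner_add_left]

lemma ContinuousLinearMap.abs_reApplyInnerSelf_le_norm {𝕜 E : Type*} [RCLike 𝕜]
    [NormedAddCommGroup E] [InnerProductSpace 𝕜 E] (T : E →L[𝕜] E) {x : E} (hx : ‖x‖ = 1) :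
    |T.reApplyInnerSelf x| ≤ ‖T‖ := by
  simpa [rayleighQuotient, hx] using T.rayleighQuotient_le_norm x

theorem Real.sum_exp_neg_mul_exp_neg_div_le_sum_exp_neg_add {ι : Type*} [Fintype ι]
    [Nonempty ι] (e v : ι → ℝ) :
    (∑ i, exp (-e i)) * exp (-((∑ i, exp (-e i) * v i) / ∑ i, exp (-e i))) ≤
      ∑ i, exp (-(e i + v i)) := by
  set Z := ∑ i, exp (-e i)
  have hZ : 0 < Z := Finset.sum_pos (fun i _ => exp_pos _) Finset.univ_nonempty
  have jensen := convexOn_exp.map_sum_le (t := Finset.univ) (w := fun i => exp (-e i) / Z)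
    (p := fun i => -v i) (fun i _ => by positivity) (by rw [← Finset.sum_div, div_self hZ.ne'])
    (fun i _ => Set.mem_univ _)
  simp only [smul_eq_mul] at jensen
  calc Z * exp (-((∑ i, exp (-e i) * v i) / Z))
      = Z * exp (∑ i, exp (-e i) / Z * -v i) := by
        rw [Finset.sum_div, ← Finset.sum_neg_distrib]
        exact congrArg (Z * exp ·) (Finset.sum_congr rfl fun i _ => by ring)
    _ ≤ Z * ∑ i, exp (-e i) / Z * exp (-v i) := by gcongr
    _ = ∑ i, exp (-(e i + v i)) := by
        rw [Finset.mul_sum]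
        refine Finset.sum_congr rfl fun i _ => ?_
        rw [neg_add, exp_add]
        field_simp

namespace Matrix.IsHermitian

variable {𝕜 n : Type*} [RCLike 𝕜] [Fintype n] [DecidableEq n] {A : Matrix n n 𝕜}

lemma exp_neg_eq (hA : A.IsHermitian) :
    NormedSpace.exp (-A) =
      hA.eigenvectorUnitary * diagonal (fun i => (Real.exp (-hA.eigenvalues i) : 𝕜)) *
        star (hA.eigenvectorUnitary : Matrix n n 𝕜) := by
  have hinv := inv_eq_left_inv (Unitary.coe_star_mul_self hA.eigenvectorUnitary)
  have hneg : -A = hA.eigenvectorUnitary * diagonal (fun i => ((-hA.eigenvalues i : ℝ) : 𝕜)) *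
      (hA.eigenvectorUnitary : Matrix n n 𝕜)⁻¹ := by
    conv_lhs => rw [hA.spectral_theorem, Unitary.conjStarAlgAut_apply]
    simp [hinv, ← diagonal_neg, Function.comp_def]
  rw [hneg, exp_conj _ _ Unitary.isUnit_coe, exp_diagonal, hinv]
  congr 3
  funext i
  rw [Pi.exp_def]
  simpa [Real.exp_eq_exp_ℝ] using
    (NormedSpace.algebraMap_exp_comm (𝕂 := ℝ) (𝔸 := 𝕜) (-hA.eigenvalues i)).symm

lemma toEuclideanCLM_eigenvectorBasis (hA : A.IsHermitian) (j : n) :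
    toEuclideanCLM (𝕜 := 𝕜) A (hA.eigenvectorBasis j) =
      (hA.eigenvalues j : 𝕜) • hA.eigenvectorBasis j := by
  rw [← RCLike.real_smul_eq_coe_smul]
  ext k
  simpa using congrFun (hA.mulVec_eigenvectorBasis j) k

lemma reApplyInnerSelf_eigenvectorBasis (hA : A.IsHermitian) (j : n) :
    (toEuclideanCLM (𝕜 := 𝕜) A).reApplyInnerSelf (hA.eigenvectorBasis j) = hA.eigenvalues j := by
  rw [ContinuousLinearMap.reApplyInnerSelf_apply, hA.toEuclideanCLM_eigenvectorBasis,
    inner_smul_real_left, hA.eigenvectorBasis.inner_eq_one, RCLike.smul_re, RCLike.one_re,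
    mul_one]

lemma star_eigenvectorUnitary_mul_mul_apply (hA : A.IsHermitian) (M : Matrix n n 𝕜) (i j : n) :
    (star (hA.eigenvectorUnitary : Matrix n n 𝕜) * M * hA.eigenvectorUnitary) i j =
      ⟪hA.eigenvectorBasis i, toEuclideanCLM (𝕜 := 𝕜) M (hA.eigenvectorBasis j)⟫_𝕜 := by
  simp only [mul_apply, star_apply, eigenvectorUnitary_apply, RCLike.star_def, PiLp.inner_apply,
    ofLp_toEuclideanCLM, mulVec, dotProduct, RCLike.inner_apply, Finset.sum_mul]
  rw [Finset.sum_comm]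
  exact Finset.sum_congr rfl fun _ _ => Finset.sum_congr rfl fun _ _ => by ring

lemma re_trace_exp_neg (hA : A.IsHermitian) :
    RCLike.re (NormedSpace.exp (-A)).trace = ∑ i, Real.exp (-hA.eigenvalues i) := by
  rw [hA.exp_neg_eq, trace_mul_cycle, Unitary.coe_star_mul_self, one_mul, trace_diagonal,
    map_sum]
  simp

lemma re_trace_exp_neg_mul (hA : A.IsHermitian) (V : Matrix n n 𝕜) :
    RCLike.re (NormedSpace.exp (-A) * V).trace =
      ∑ i, Real.exp (-hA.eigenvalues i) *
        (toEuclideanCLM (𝕜 := 𝕜) V).reApplyInnerSelf (hA.eigenvectorBasis i) := by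
  rw [hA.exp_neg_eq, Matrix.mul_assoc, Matrix.mul_assoc, trace_mul_comm, Matrix.mul_assoc,
    trace, map_sum]
  refine Finset.sum_congr rfl fun i _ => ?_
  rw [diag_apply, diagonal_mul, hA.star_eigenvectorUnitary_mul_mul_apply,
    ContinuousLinearMap.reApplyInnerSelf_apply, inner_re_symm, RCLike.re_ofReal_mul]

lemma re_trace_exp_neg_mul_le (hA : A.IsHermitian) (V : Matrix n n 𝕜) :
    RCLike.re (NormedSpace.exp (-A) * V).trace ≤
      ‖toEuclideanCLM (𝕜 := 𝕜) V‖ * RCLike.re (NormedSpace.exp (-A)).trace := by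
  rw [hA.re_trace_exp_neg_mul, hA.re_trace_exp_neg, Finset.mul_sum]
  refine Finset.sum_le_sum fun i _ => ?_
  rw [mul_comm ‖_‖]
  gcongr
  exact (abs_le.mp ((toEuclideanCLM (𝕜 := 𝕜) V).abs_reApplyInnerSelf_le_norm
    (hA.eigenvectorBasis.norm_eq_one i))).2

lemma sum_exp_neg_reApplyInnerSelf_le_re_trace_exp_neg (hA : A.IsHermitian)
    (b : OrthonormalBasis n 𝕜 (EuclideanSpace 𝕜 n)) :
    ∑ i, Real.exp (-(toEuclideanCLM (𝕜 := 𝕜) A).reApplyInnerSelf (b i)) ≤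
      RCLike.re (NormedSpace.exp (-A)).trace := by
  have eigen (j : n) : toEuclideanCLM (𝕜 := 𝕜) (-A) (hA.eigenvectorBasis j) =
      ((-hA.eigenvalues j : ℝ) : 𝕜) • hA.eigenvectorBasis j := by
    rw [map_neg, _root_.neg_apply, hA.toEuclideanCLM_eigenvectorBasis, RCLike.ofReal_neg,
      neg_smul]
  have := convexOn_exp.sum_comp_reApplyInnerSelf_le _ hA.eigenvectorBasis _ b
    (fun _ => Set.mem_univ _) eigen
  simpa [hA.re_trace_exp_neg, ContinuousLinearMap.reApplyInnerSelf_apply] using this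

end Matrix.IsHermitian

/-- Peierls–Bogoliubov inequality:
`log tr(exp(−(H+V))) ≥ log tr(exp(−H)) − Re tr(exp(−H)V)/tr(exp(−H))`, and in particular
`tr(exp(−(H+V))) ≥ exp(−‖V‖) tr(exp(−H))`. -/
theorem peierls_bogoliubov {n : ℕ} (hn : 0 < n)
    (H V : Matrix (Fin n) (Fin n) ℂ) (hH : H.IsHermitian) (hV : V.IsHermitian) :
    Real.log ((NormedSpace.exp (-H)).trace).re -
        ((NormedSpace.exp (-H) * V).trace).re / ((NormedSpace.exp (-H)).trace).re ≤
      Real.log ((NormedSpace.exp (-(H + V))).trace).re ∧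
    Real.exp (-opNorm V) * ((NormedSpace.exp (-H)).trace).re ≤
      ((NormedSpace.exp (-(H + V))).trace).re := by
  have : Nonempty (Fin n) := ⟨⟨0, hn⟩⟩
  have peierls := (hH.add hV).sum_exp_neg_reApplyInnerSelf_le_re_trace_exp_neg hH.eigenvectorBasis
  simp only [map_add, ContinuousLinearMap.reApplyInnerSelf_add,
    hH.reApplyInnerSelf_eigenvectorBasis] at peierls
  have central :=
    (Real.sum_exp_neg_mul_exp_neg_div_le_sum_exp_neg_add hH.eigenvalues _).trans peierls
  rw [← hH.re_trace_exp_neg, ← hH.re_trace_exp_neg_mul] at central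
  have hZ : 0 < ((NormedSpace.exp (-H)).trace).re := by
    rw [← RCLike.re_to_complex, hH.re_trace_exp_neg]
    exact Finset.sum_pos (fun i _ => Real.exp_pos _) Finset.univ_nonempty
  have hSZ := hH.re_trace_exp_neg_mul_le V
  simp only [RCLike.re_to_complex] at central hSZ
  refine ⟨?_, ?_⟩
  · have := Real.log_le_log (by positivity) central
    rwa [Real.log_mul hZ.ne' (Real.exp_pos _).ne', Real.log_exp, ← sub_eq_add_neg] at this
  · rw [mul_comm] at central
    refine le_trans ?_ central
    gcongr
    rwa [div_le_iff₀ hZ]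
end

section
/- Let H and K be Hermitian n×n complex matrices, c ∈ ℝ and δ ≥ 0, and suppose (c−δ)·I ≤ H − K ≤ (c+δ)·I in the Loewner order. Then ‖(−H − log tr(exp(−H))·I) − (−K − log tr(exp(−K))·I)‖ ≤ 2δ; equivalently, the logarithms of the two normalized Gibbs density matrices exp(−H)/tr(exp(−H)) and exp(−K)/tr(exp(−K)) differ in operator norm by at most 2δ. (The estimate ‖log ω^c_{Φ,Λ} − log ω^c_{Ψ,Λ}‖ ≤ 2δ|Λ| from the proof of Proposition prop:weakGibbs_are_eq (4).) -/
/-!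
Tr exp is monotone in the Loewner order: in an eigenbasis `uᵢ` of the smaller matrix `A ≤ B`,
`exp λᵢ(A) ≤ exp ⟪uᵢ, B uᵢ⟫ ≤ ⟪uᵢ, exp B uᵢ⟫` by Jensen's inequality (Peierls), and summing over
`i` gives `tr exp A ≤ tr exp B`. Since moreover `tr exp (A + s) = eˢ tr exp A`, the sandwich
`K + (c - δ) ≤ H ≤ K + (c + δ)` confines `log tr exp (-K) - log tr exp (-H)` to `[c - δ, c + δ]`.
The difference of the two log-densities is `r - (H - K)` for this scalar `r`; as the spectrum of
`H - K` lies in the same interval, the spectrum of the difference lies in `[-2δ, 2δ]`, and the norm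
of a self-adjoint element is its spectral radius.
-/

open scoped Matrix ComplexOrder

theorem IsSelfAdjoint.norm_algebraMap_sub_le {A : Type*} [CStarAlgebra A] [PartialOrder A]
    [StarOrderedRing A] [Nontrivial A] {x : A} (hx : IsSelfAdjoint x) {lo hi t : ℝ}
    (hlo : algebraMap ℝ A lo ≤ x) (hhi : x ≤ algebraMap ℝ A hi) (ht : t ∈ Set.Icc lo hi) :
    ‖algebraMap ℝ A t - x‖ ≤ hi - lo := by
  have hσ : ∀ y ∈ spectrum ℝ (algebraMap ℝ A t - x), |y| ≤ hi - lo := by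
    rw [← spectrum.singleton_sub_eq]
    rintro _ ⟨_, rfl, z, hz, rfl⟩
    have := (algebraMap_le_iff_le_spectrum hx).mp hlo z hz
    have := (le_algebraMap_iff_spectrum_le hx).mp hhi z hz
    rw [abs_le]
    constructor <;> linarith [ht.1, ht.2]
  rcases CStarAlgebra.norm_or_neg_norm_mem_spectrum
    ((IsSelfAdjoint.algebraMap A (.all t)).sub hx) with h | h
  · exact (le_abs_self _).trans (hσ _ h)
  · simpa using hσ _ h

namespace Matrix

open scoped MatrixOrder

variable {ι : Type*} [Fintype ι] [DecidableEq ι]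

open scoped Matrix.Norms.L2Operator in
theorem IsHermitian.exp_eq_cfc {A : Matrix ι ι ℂ} (hA : A.IsHermitian) :
    NormedSpace.exp A = cfc Real.exp A :=
  (CFC.real_exp_eq_normedSpace_exp hA.isSelfAdjoint).symm

open scoped Matrix.Norms.L2Operator in
theorem exp_add_algebraMap (A : Matrix ι ι ℂ) (s : ℝ) :
    NormedSpace.exp (A + algebraMap ℝ _ s) = Real.exp s • NormedSpace.exp A := by
  rw [exp_add_of_commute _ _ (Algebra.commutes s A).symm, ← NormedSpace.algebraMap_exp_comm,
    ← Real.exp_eq_exp_ℝ, ← Algebra.commutes, Algebra.smul_def]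

theorem re_trace_exp_add_algebraMap (A : Matrix ι ι ℂ) (s : ℝ) :
    (NormedSpace.exp (A + algebraMap ℝ _ s)).trace.re =
      Real.exp s * (NormedSpace.exp A).trace.re := by
  rw [exp_add_algebraMap, trace_smul, Complex.smul_re, smul_eq_mul]

theorem IsHermitian.trace_cfc_s9 {A : Matrix ι ι ℂ} (hA : A.IsHermitian) (f : ℝ → ℝ) :
    (cfc f A).trace = ∑ i, (f (hA.eigenvalues i) : ℂ) := by
  rw [hA.cfc_eq, IsHermitian.cfc, Unitary.conjStarAlgAut_apply, trace_mul_cycle,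
    Unitary.coe_star_mul_self, one_mul, trace_diagonal]
  rfl

theorem IsHermitian.re_trace_exp_pos [Nonempty ι] {A : Matrix ι ι ℂ} (hA : A.IsHermitian) :
    0 < (NormedSpace.exp A).trace.re := by
  rw [hA.exp_eq_cfc, hA.trace_cfc_s9, Complex.re_sum]
  exact Finset.sum_pos (fun i _ => by rw [Complex.ofReal_re]; exact Real.exp_pos _)
    Finset.univ_nonempty

theorem IsHermitian.trace_eq_sum_star_dotProduct_mulVec {A : Matrix ι ι ℂ} (hA : A.IsHermitian)
    (X : Matrix ι ι ℂ) :
    X.trace = ∑ i, star ⇑(hA.eigenvectorBasis i) ⬝ᵥ X *ᵥ ⇑(hA.eigenvectorBasis i) := by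
  let U : Matrix ι ι ℂ := hA.eigenvectorUnitary
  calc X.trace = (star U * X * U).trace := by
        rw [trace_mul_cycle, ← Unitary.coe_star, Unitary.coe_mul_star_self, one_mul]
    _ = _ := Finset.sum_congr rfl fun i _ => by
      rw [← hA.eigenvectorUnitary_mulVec, star_mulVec, ← dotProduct_mulVec, mulVec_mulVec,
        mulVec_mulVec, ← star_eq_conjTranspose]
      simp [U]

theorem IsHermitian.re_dotProduct_cfc_mulVec {M : Matrix ι ι ℂ} (hM : M.IsHermitian)
    (f : ℝ → ℝ) (v : ι → ℂ) :
    (star v ⬝ᵥ cfc f M *ᵥ v).re = ∑ j, Complex.normSq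
      ((star (hM.eigenvectorUnitary : Matrix ι ι ℂ) *ᵥ v) j) * f (hM.eigenvalues j) := by
  set U : Matrix ι ι ℂ := (hM.eigenvectorUnitary : Matrix ι ι ℂ)
  set D : Matrix ι ι ℂ := diagonal (RCLike.ofReal ∘ f ∘ hM.eigenvalues)
  have hstar :
      star v ⬝ᵥ U *ᵥ (D *ᵥ (star U *ᵥ v)) = star (star U *ᵥ v) ⬝ᵥ D *ᵥ (star U *ᵥ v) := by
    rw [dotProduct_mulVec, star_mulVec, star_eq_conjTranspose, conjTranspose_conjTranspose]
  rw [hM.cfc_eq, IsHermitian.cfc, Unitary.conjStarAlgAut_apply, ← mulVec_mulVec,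
    ← mulVec_mulVec, hstar]
  simp only [dotProduct, D, mulVec_diagonal, Complex.re_sum]
  refine Finset.sum_congr rfl fun j _ => ?_
  rw [Pi.star_apply, mul_left_comm, RCLike.star_def, ← Complex.normSq_eq_conj_mul_self]
  simp [mul_comm]

/-- Peierls' inequality. -/
theorem _root_.ConvexOn.map_re_dotProduct_mulVec_le {f : ℝ → ℝ} (hf : ConvexOn ℝ Set.univ f)
    {M : Matrix ι ι ℂ} (hM : M.IsHermitian) {v : ι → ℂ} (hv : star v ⬝ᵥ v = 1) :
    f (star v ⬝ᵥ M *ᵥ v).re ≤ (star v ⬝ᵥ cfc f M *ᵥ v).re := by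
  have hweights := hM.re_dotProduct_cfc_mulVec (fun _ => 1) v
  have hmean := hM.re_dotProduct_cfc_mulVec id v
  rw [cfc_const_one ℝ M, one_mulVec, hv, Complex.one_re] at hweights
  simp only [mul_one] at hweights
  rw [cfc_id ℝ M] at hmean
  rw [hmean, hM.re_dotProduct_cfc_mulVec]
  simpa only [smul_eq_mul, id] using
    hf.map_sum_le (fun j _ => Complex.normSq_nonneg _) hweights.symm (fun j _ => Set.mem_univ _)

theorem IsHermitian.re_trace_exp_le_of_le {A B : Matrix ι ι ℂ} (hA : A.IsHermitian)
    (hB : B.IsHermitian) (hAB : A ≤ B) :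
    (NormedSpace.exp A).trace.re ≤ (NormedSpace.exp B).trace.re := by
  rw [hA.exp_eq_cfc, hB.exp_eq_cfc, hA.trace_cfc_s9, hA.trace_eq_sum_star_dotProduct_mulVec,
    Complex.re_sum, Complex.re_sum]
  refine Finset.sum_le_sum fun i _ => ?_
  set v := ⇑(hA.eigenvectorBasis i)
  have hv : star v ⬝ᵥ v = 1 := by
    rw [dotProduct_comm, ← EuclideanSpace.inner_eq_star_dotProduct, OrthonormalBasis.inner_eq_one]
  have hquad : hA.eigenvalues i ≤ (star v ⬝ᵥ B *ᵥ v).re := by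
    have := (le_iff.mp hAB).re_dotProduct_nonneg v
    rw [sub_mulVec, dotProduct_sub, map_sub] at this
    rw [hA.eigenvalues_eq]
    exact sub_nonneg.mp this
  calc (Real.exp (hA.eigenvalues i) : ℂ).re ≤ Real.exp (star v ⬝ᵥ B *ᵥ v).re := by
        rw [Complex.ofReal_re]
        exact Real.exp_le_exp.mpr hquad
    _ ≤ _ := convexOn_exp.map_re_dotProduct_mulVec_le hB hv

theorem IsHermitian.log_re_trace_exp_le_of_sub_le [Nonempty ι] {A B : Matrix ι ι ℂ}
    (hA : A.IsHermitian) (hB : B.IsHermitian) {s : ℝ} (h : A - B ≤ algebraMap ℝ _ s) :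
    Real.log (NormedSpace.exp A).trace.re ≤ Real.log (NormedSpace.exp B).trace.re + s := by
  have hmono := hA.re_trace_exp_le_of_le (hB.add (IsSelfAdjoint.algebraMap _ (.all s)))
    (sub_le_iff_le_add'.mp h)
  rw [re_trace_exp_add_algebraMap] at hmono
  calc Real.log (NormedSpace.exp A).trace.re
      ≤ Real.log (Real.exp s * (NormedSpace.exp B).trace.re) :=
        Real.log_le_log hA.re_trace_exp_pos hmono
    _ = Real.log (NormedSpace.exp B).trace.re + s := by
        rw [Real.log_mul (Real.exp_pos s).ne' hB.re_trace_exp_pos.ne', Real.log_exp, add_comm]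

end Matrix

theorem log_gibbs_density_estimate_of_loewner_general {n : ℕ} (hn : 0 < n)
    (H K : Matrix (Fin n) (Fin n) ℂ) (hH : H.IsHermitian) (hK : K.IsHermitian)
    (c δ : ℝ)
    (hlow : ((H - K) - ((c - δ : ℝ) : ℂ) • (1 : Matrix (Fin n) (Fin n) ℂ)).PosSemidef)
    (hup : (((c + δ : ℝ) : ℂ) • (1 : Matrix (Fin n) (Fin n) ℂ) - (H - K)).PosSemidef) :
    opNorm ((-H - (Real.log ((NormedSpace.exp (-H)).trace).re : ℂ) •
          (1 : Matrix (Fin n) (Fin n) ℂ)) -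
        (-K - (Real.log ((NormedSpace.exp (-K)).trace).re : ℂ) •
          (1 : Matrix (Fin n) (Fin n) ℂ))) ≤ 2 * δ := by
  open scoped MatrixOrder Matrix.Norms.L2Operator in
  have : Nonempty (Fin n) := ⟨⟨0, hn⟩⟩
  have hscalar (t : ℝ) : (t : ℂ) • (1 : Matrix (Fin n) (Fin n) ℂ) = algebraMap ℝ _ t := by
    rw [Algebra.algebraMap_eq_smul_one, Complex.coe_smul]
  rw [hscalar] at hlow hup
  have hlow' : algebraMap ℝ _ (c - δ) ≤ H - K := Matrix.le_iff.mpr hlow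
  have hup' : H - K ≤ algebraMap ℝ _ (c + δ) := Matrix.le_iff.mpr hup
  have hlogH := hH.neg.log_re_trace_exp_le_of_sub_le hK.neg (s := -(c - δ))
    (by rw [neg_sub_neg, ← neg_sub, map_neg]; exact neg_le_neg hlow')
  have hlogK := hK.neg.log_re_trace_exp_le_of_sub_le hH.neg (s := c + δ)
    (by rwa [neg_sub_neg])
  rw [hscalar, hscalar, opNorm, ← Matrix.cstar_norm_def]
  calc _ = ‖algebraMap ℝ _ (Real.log (NormedSpace.exp (-K)).trace.re -
          Real.log (NormedSpace.exp (-H)).trace.re) - (H - K)‖ := by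
        rw [map_sub]; congr 1; abel
    _ ≤ (c + δ) - (c - δ) := (hH.sub hK).isSelfAdjoint.norm_algebraMap_sub_le hlow' hup'
        ⟨by linarith, by linarith⟩
    _ = 2 * δ := by ring

/-- If `(c−δ)·I ≤ H − K ≤ (c+δ)·I` in the Loewner order (for Hermitian `H, K`), then the
logarithms of the normalized Gibbs density matrices, `−H − log tr(exp(−H))·I` and
`−K − log tr(exp(−K))·I`, differ in operator norm by at most `2δ`. -/
theorem log_gibbs_density_estimate_of_loewner {n : ℕ} (hn : 0 < n)
    (H K : Matrix (Fin n) (Fin n) ℂ) (hH : H.IsHermitian) (hK : K.IsHermitian)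
    (c δ : ℝ) (hδ : 0 ≤ δ)
    (hlow : ((H - K) - ((c - δ : ℝ) : ℂ) • (1 : Matrix (Fin n) (Fin n) ℂ)).PosSemidef)
    (hup : (((c + δ : ℝ) : ℂ) • (1 : Matrix (Fin n) (Fin n) ℂ) - (H - K)).PosSemidef) :
    opNorm ((-H - (Real.log ((NormedSpace.exp (-H)).trace).re : ℂ) •
          (1 : Matrix (Fin n) (Fin n) ℂ)) -
        (-K - (Real.log ((NormedSpace.exp (-K)).trace).re : ℂ) •
          (1 : Matrix (Fin n) (Fin n) ℂ))) ≤ 2 * δ :=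
  log_gibbs_density_estimate_of_loewner_general hn H K hH hK c δ hlow hup
end
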